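/- arXiv:2501.13038 — 8 statements merged into one kernel-verified Lean document; each statement's English description precedes it below -/
import Mathlib

section
/- For the function f₁ defined piecewise as above, for every fixed x₂ ∈ ℝ the function x₁ ↦ f₁(x₁, x₂) is convex on ℝ. -/
noncomputable def f1 (x1 x2 : ℝ) : ℝ :=
  if x2 ≤ 0 then
    if x1 < -1 then (x2/2 - 1) * x1 - (3/2 * x2 + 1)
    else if x1 ≤ 1 then (x2 * x1 - 3 * x2) / 2
    else (1 - x2/2) * x1 - (x2/2 + 1)
  else
    if x1 < -1 then -(1 + x2/2) * x1 + (x2/2 - 1)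
    else if x1 ≤ 1 then (x2 * x1 + 3 * x2) / 2
    else (1 + x2/2) * x1 + (3/2 * x2 - 1)

lemma affine_cvx (a b : ℝ) : ConvexOn ℝ Set.univ (fun x : ℝ => a * x + b) :=
  ⟨convex_univ, fun x _ y _ p q _ _ hpq => by
    simp only [smul_eq_mul]
    exact le_of_eq (by linear_combination (-b) * hpq)⟩

lemma max3_cvx (a1 b1 a2 b2 a3 b3 : ℝ) :
    ConvexOn ℝ Set.univ (fun x : ℝ => max (max (a1 * x + b1) (a2 * x + b2)) (a3 * x + b3)) := by
  have h := ((affine_cvx a1 b1).sup (affine_cvx a2 b2)).sup (affine_cvx a3 b3)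
  simpa [Pi.sup_def] using h

/-- For every fixed x₂, the function x₁ ↦ f₁(x₁, x₂) is convex on ℝ. -/
theorem stmt_6 (x2 : ℝ) : ConvexOn ℝ Set.univ (fun x1 : ℝ => f1 x1 x2) := by
  rcases le_or_gt x2 0 with h | h
  · have heq : (fun x1 : ℝ => f1 x1 x2) =
        fun x1 : ℝ => max (max ((x2/2 - 1) * x1 + (-(3/2 * x2 + 1))) (x2/2 * x1 + (-3/2 * x2)))
          ((1 - x2/2) * x1 + (-(x2/2 + 1))) := by
      funext x1
      simp only [f1, if_pos h]
      rcases lt_or_ge x1 (-1) with h1 | h1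
      · rw [if_pos h1]
        refine le_antisymm (le_max_of_le_left (le_max_of_le_left (by nlinarith)))
          (max_le (max_le (by nlinarith) (by nlinarith)) (by nlinarith))
      · rw [if_neg (not_lt.mpr h1)]
        rcases le_or_gt x1 1 with h2 | h2
        · rw [if_pos h2]
          refine le_antisymm (le_max_of_le_left (le_max_of_le_right (by nlinarith)))
            (max_le (max_le (by nlinarith) (by nlinarith)) (by nlinarith))
        · rw [if_neg (not_le.mpr h2)]
          refine le_antisymm (le_max_of_le_right (by nlinarith))
            (max_le (max_le (by nlinarith) (by nlinarith)) (by nlinarith))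
    rw [heq]; exact max3_cvx _ _ _ _ _ _
  · have heq : (fun x1 : ℝ => f1 x1 x2) =
        fun x1 : ℝ => max (max (-(1 + x2/2) * x1 + (x2/2 - 1)) (x2/2 * x1 + (3/2 * x2)))
          ((1 + x2/2) * x1 + (3/2 * x2 - 1)) := by
      funext x1
      simp only [f1, if_neg (not_le.mpr h)]
      rcases lt_or_ge x1 (-1) with h1 | h1
      · rw [if_pos h1]
        refine le_antisymm (le_max_of_le_left (le_max_of_le_left (by nlinarith)))
          (max_le (max_le (by nlinarith) (by nlinarith)) (by nlinarith))
      · rw [if_neg (not_lt.mpr h1)]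
        rcases le_or_gt x1 1 with h2 | h2
        · rw [if_pos h2]
          refine le_antisymm (le_max_of_le_left (le_max_of_le_right (by nlinarith)))
            (max_le (max_le (by nlinarith) (by nlinarith)) (by nlinarith))
        · rw [if_neg (not_le.mpr h2)]
          refine le_antisymm (le_max_of_le_right (by nlinarith))
            (max_le (max_le (by nlinarith) (by nlinarith)) (by nlinarith))
    rw [heq]; exact max3_cvx _ _ _ _ _ _
end

section
/- For the function f₁ defined piecewise as above, for every fixed x₁ ∈ ℝ the function x₂ ↦ f₁(x₁, x₂) is convex on ℝ. -/
lemma affine_convexOn (a c : ℝ) : ConvexOn ℝ Set.univ (fun x : ℝ => a * x + c) := by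
  refine ⟨convex_univ, fun x _ y _ s t hs ht hst => le_of_eq ?_⟩
  simp only [smul_eq_mul]
  linear_combination (-c) * hst

lemma aux_convex (a b c : ℝ) (h : a ≤ b) :
    ConvexOn ℝ Set.univ (fun x : ℝ => if x ≤ 0 then a * x + c else b * x + c) := by
  have hmax : (fun x : ℝ => if x ≤ 0 then a * x + c else b * x + c)
      = fun x : ℝ => max (a * x + c) (b * x + c) := by
    funext x
    by_cases hx : x ≤ 0
    · rw [if_pos hx, max_eq_left (by nlinarith)]
    · rw [if_neg hx, max_eq_right (by nlinarith [not_le.mp hx])]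
  rw [hmax]
  exact (affine_convexOn a c).sup (affine_convexOn b c)

/-- For every fixed x₁, the function x₂ ↦ f₁(x₁, x₂) is convex on ℝ. -/
theorem stmt_7 (x1 : ℝ) : ConvexOn ℝ Set.univ (fun x2 : ℝ => f1 x1 x2) := by
  rcases lt_or_ge x1 (-1) with h | h
  · have key := aux_convex (x1/2 - 3/2) (1/2 - x1/2) (-x1 - 1) (by linarith)
    have heq : (fun x2 : ℝ => f1 x1 x2)
        = fun x2 : ℝ => if x2 ≤ 0 then (x1/2 - 3/2) * x2 + (-x1 - 1)
            else (1/2 - x1/2) * x2 + (-x1 - 1) := by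
      funext x2; unfold f1
      split_ifs <;> first | ring1 | (exfalso; linarith)
    rw [heq]; exact key
  · rcases le_or_gt x1 1 with h2 | h2
    · have key := aux_convex ((x1 - 3)/2) ((x1 + 3)/2) 0 (by linarith)
      have heq : (fun x2 : ℝ => f1 x1 x2)
          = fun x2 : ℝ => if x2 ≤ 0 then (x1 - 3)/2 * x2 + 0
              else (x1 + 3)/2 * x2 + 0 := by
        funext x2; unfold f1
        split_ifs <;> first | ring1 | (exfalso; linarith)
      rw [heq]; exact key
    · have key := aux_convex (-x1/2 - 1/2) (x1/2 + 3/2) (x1 - 1) (by linarith)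
      have heq : (fun x2 : ℝ => f1 x1 x2)
          = fun x2 : ℝ => if x2 ≤ 0 then (-x1/2 - 1/2) * x2 + (x1 - 1)
              else (x1/2 + 3/2) * x2 + (x1 - 1) := by
        funext x2; unfold f1
        split_ifs <;> first | ring1 | (exfalso; linarith)
      rw [heq]; exact key
end

section
/- For the function f₁ defined piecewise as above, f₁(x₁, x₂) ≥ 0 for all (x₁, x₂) ∈ ℝ², and f₁(x₁, x₂) = 0 if and only if x₂ = 0 and |x₁| ≤ 1. -/
lemma key (x1 x2 : ℝ) : 0 ≤ f1 x1 x2 ∧ (f1 x1 x2 = 0 ↔ x2 = 0 ∧ (-1 ≤ x1 ∧ x1 ≤ 1)) := by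
  unfold f1
  split_ifs with h1 h2 h3 h4 h5 <;>
    (try push_neg at *) <;>
    refine ⟨by nlinarith, ?_, fun ⟨hx2, hx⟩ => by nlinarith [hx.1, hx.2]⟩ <;>
    intro h <;>
    constructor <;>
    try constructor
  all_goals nlinarith

/-- f₁ ≥ 0 everywhere, and f₁(x₁,x₂) = 0 ↔ x₂ = 0 ∧ |x₁| ≤ 1. -/
theorem stmt_8 :
    (∀ x1 x2 : ℝ, 0 ≤ f1 x1 x2) ∧
    (∀ x1 x2 : ℝ, f1 x1 x2 = 0 ↔ x2 = 0 ∧ |x1| ≤ 1) := by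
  refine ⟨fun x1 x2 => (key x1 x2).1, fun x1 x2 => ?_⟩
  rw [abs_le]
  exact (key x1 x2).2
end

section
/- For the function f₁ defined piecewise as above and any x₂ ≠ 0, the inequality f₁(x₁, x₂) > f₁(x₁, 0) holds for all x₁ ∈ ℝ. -/
/-- For x₂ ≠ 0, f₁(x₁, x₂) > f₁(x₁, 0) for all x₁. -/
theorem stmt_9 (x2 : ℝ) (hx2 : x2 ≠ 0) : ∀ x1 : ℝ, f1 x1 0 < f1 x1 x2 := by
  intro x1
  rcases hx2.lt_or_gt with h | h <;> unfold f1 <;> split_ifs <;> nlinarith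
end

section
/- For the function f₁ defined piecewise as above, let a > 1 be real, and fix x₂ > 0. Then x₁ = −1 is the unique minimizer of x₁ ↦ f₁(x₁, x₂) over [−a, a]; similarly, for x₂ < 0, x₁ = 1 is the unique minimizer over [−a, a]. -/
/-- For a > 1: if x₂ > 0 then x₁ = -1 is the unique minimizer of f₁(·, x₂) on [-a, a];
if x₂ < 0 then x₁ = 1 is the unique minimizer. -/
theorem stmt_10 (a : ℝ) (ha : 1 < a) :
    (∀ x2 : ℝ, 0 < x2 →
      (∀ x1 ∈ Set.Icc (-a) a, f1 (-1) x2 ≤ f1 x1 x2) ∧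
      (∀ x1 ∈ Set.Icc (-a) a, x1 ≠ -1 → f1 (-1) x2 < f1 x1 x2)) ∧
    (∀ x2 : ℝ, x2 < 0 →
      (∀ x1 ∈ Set.Icc (-a) a, f1 1 x2 ≤ f1 x1 x2) ∧
      (∀ x1 ∈ Set.Icc (-a) a, x1 ≠ 1 → f1 1 x2 < f1 x1 x2)) := by
  constructor
  · intro x2 hx2
    have key : ∀ x1 ∈ Set.Icc (-a) a, x1 ≠ -1 → f1 (-1) x2 < f1 x1 x2 := by
      intro x1 _ hne
      have h1 : f1 (-1) x2 = x2 := by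
        simp only [f1, if_neg (not_le.2 hx2), if_neg (lt_irrefl (-1 : ℝ)),
          if_pos (by norm_num : (-1:ℝ) ≤ 1)]
        ring
      rw [h1]
      simp only [f1, if_neg (not_le.2 hx2)]
      split_ifs with h2 h3
      · nlinarith
      · rcases lt_or_gt_of_ne hne with h | h
        · exact absurd h h2
        · nlinarith
      · push_neg at h3; nlinarith
    refine ⟨fun x1 hx1 => ?_, key⟩
    rcases eq_or_ne x1 (-1) with h | h
    · rw [h]
    · exact (key x1 hx1 h).le
  · intro x2 hx2
    have key : ∀ x1 ∈ Set.Icc (-a) a, x1 ≠ 1 → f1 1 x2 < f1 x1 x2 := by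
      intro x1 _ hne
      have h1 : f1 1 x2 = -x2 := by
        simp only [f1, if_pos hx2.le, if_neg (by norm_num : ¬ (1:ℝ) < -1),
          if_pos (le_refl (1:ℝ))]
        ring
      rw [h1]
      simp only [f1, if_pos hx2.le]
      split_ifs with h2 h3
      · nlinarith
      · have : x1 < 1 := lt_of_le_of_ne h3 hne
        nlinarith
      · push_neg at h3; nlinarith
    refine ⟨fun x1 hx1 => ?_, key⟩
    rcases eq_or_ne x1 1 with h | h
    · rw [h]
    · exact (key x1 hx1 h).le
end

section
/- For the function f₁ defined piecewise as above with x₂ = 0, every point x₁ ∈ [−1, 1] is a minimizer of x₁ ↦ f₁(x₁, 0) over ℝ, and the set of global minimizers of f₁ over ℝ² equals the convex set {(x₁, 0) : x₁ ∈ [−1, 1]}. -/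
lemma f1_nonneg (a b : ℝ) : 0 ≤ f1 a b := by
  unfold f1
  split_ifs with h1 h2 h3 h4 h5 <;> nlinarith

lemma f1_zero {a : ℝ} (h : a ∈ Set.Icc (-1:ℝ) 1) : f1 a 0 = 0 := by
  obtain ⟨h1, h2⟩ := h
  unfold f1
  rw [if_pos le_rfl, if_neg (by linarith), if_pos h2]
  ring

lemma f1_pos {a b : ℝ} (h : ¬(b = 0 ∧ a ∈ Set.Icc (-1:ℝ) 1)) : 0 < f1 a b := by
  unfold f1
  simp only [Set.mem_Icc, not_and, not_le] at h
  split_ifs with h1 h2 h3 h4 h5 <;> try push_neg at *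
  · nlinarith
  · have hb : b < 0 := lt_of_le_of_ne h1 (fun hb0 => by
      have := h hb0 (by linarith); linarith)
    nlinarith
  all_goals nlinarith

/-- Every x₁ ∈ [-1,1] minimizes f₁(·, 0) over ℝ, and the set of global minimizers of f₁
over ℝ² equals the convex set {(x₁, 0) : x₁ ∈ [-1,1]}. -/
theorem stmt_11 :
    (∀ x1 ∈ Set.Icc (-1:ℝ) 1, ∀ y : ℝ, f1 x1 0 ≤ f1 y 0) ∧
    ({p : ℝ × ℝ | ∀ q : ℝ × ℝ, f1 p.1 p.2 ≤ f1 q.1 q.2} =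
      {p : ℝ × ℝ | p.2 = 0 ∧ p.1 ∈ Set.Icc (-1:ℝ) 1}) ∧
    Convex ℝ {p : ℝ × ℝ | p.2 = 0 ∧ p.1 ∈ Set.Icc (-1:ℝ) 1} := by
  refine ⟨fun x1 hx y => ?_, ?_, ?_⟩
  · rw [f1_zero hx]; exact f1_nonneg y 0
  · ext p
    simp only [Set.mem_setOf_eq]
    constructor
    · intro hp
      by_contra hc
      have h1 := hp (0, 0)
      have h2 := f1_zero (show (0:ℝ) ∈ Set.Icc (-1:ℝ) 1 by constructor <;> norm_num)
      have := f1_pos hc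
      simp [h2] at h1
      linarith
    · rintro ⟨hb, ha⟩ q
      have : f1 p.1 p.2 = 0 := by rw [hb]; exact f1_zero ha
      rw [this]; exact f1_nonneg q.1 q.2
  · intro p hp q hq s t hs ht hst
    simp only [Set.mem_setOf_eq, Set.mem_Icc, Prod.fst_add, Prod.snd_add,
      Prod.smul_fst, Prod.smul_snd, smul_eq_mul] at *
    refine ⟨by simp [hp.1, hq.1], ?_, ?_⟩ <;> nlinarith [hp.2.1, hq.2.1, hp.2.2, hq.2.2]
end

section
/- Let F : ℝ² → ℝ, F(x₁, x₂) = g'(x₁) + α x₂² exp(α x₁), where g : ℝ → ℝ is differentiable with g' monotonically increasing and satisfying g'(x) − g'(y) ≤ 2(x − y) for all x ≥ y, and α > 0. Suppose 0 < x₂ < x̃₂, and x₁, x̃₁ satisfy F(x₁, x₂) = 0 and F(x̃₁, x̃₂) = 0. Then x̃₁ < x₁. -/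
/-- First-order comparison: if F(x₁,x₂) = g'(x₁) + α x₂² exp(α x₁) vanishes at
(x₁, x₂) and (x̃₁, x̃₂) with 0 < x₂ < x̃₂, then x̃₁ < x₁. -/
theorem stmt_16 (g g' : ℝ → ℝ) (hderiv : ∀ x, HasDerivAt g (g' x) x)
    (hmono : Monotone g')
    (hlip : ∀ x y : ℝ, y ≤ x → g' x - g' y ≤ 2 * (x - y))
    (α : ℝ) (hα : 0 < α)
    (x2 xt2 x1 xt1 : ℝ) (hx2 : 0 < x2) (hlt : x2 < xt2)
    (hF1 : g' x1 + α * x2^2 * Real.exp (α * x1) = 0)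
    (hF2 : g' xt1 + α * xt2^2 * Real.exp (α * xt1) = 0) :
    xt1 < x1 := by
  by_contra h
  push_neg at h
  have hg : g' x1 ≤ g' xt1 := hmono h
  have hexp : Real.exp (α * x1) ≤ Real.exp (α * xt1) :=
    Real.exp_le_exp.mpr (by nlinarith)
  have h1 : (0:ℝ) < Real.exp (α * x1) := Real.exp_pos _
  have hsq : x2^2 < xt2^2 := by nlinarith
  have key : α * x2^2 * Real.exp (α * x1) < α * xt2^2 * Real.exp (α * xt1) := by
    have : α * x2^2 < α * xt2^2 := by nlinarith
    calc α * x2^2 * Real.exp (α * x1) < α * xt2^2 * Real.exp (α * x1) :=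
          mul_lt_mul_of_pos_right this h1
      _ ≤ α * xt2^2 * Real.exp (α * xt1) :=
          mul_le_mul_of_nonneg_left hexp (by positivity)
  linarith
end

section
/- Let f : ℝ² → ℝ be continuous with f ≥ 0, and suppose for each x₂ > 0 there is a unique minimizer G(x₂) of x₁ ↦ f(x₁, x₂) over ℝ, such that G is monotonically increasing as x₂ decreases to 0 and G(x₂) ≤ −ξ for all x₂ > 0, where ξ > 0. If the zero set of f(·, 0) equals [−ξ, ξ], and min_{x₁} f(x₁, x₂) → 0 as x₂ → 0⁺, then lim_{x₂ → 0⁺} G(x₂) = −ξ. -/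
/-- If f is continuous and nonnegative, G(x₂) is the unique minimizer of f(·, x₂) for
each x₂ > 0, G increases as x₂ decreases, G ≤ -ξ, the zero set of f(·,0) is [-ξ, ξ],
and the minimum value tends to 0 as x₂ → 0⁺, then G(x₂) → -ξ as x₂ → 0⁺. -/
theorem stmt_17 (f : ℝ → ℝ → ℝ)
    (hcont : Continuous (fun p : ℝ × ℝ => f p.1 p.2))
    (hnonneg : ∀ x1 x2, 0 ≤ f x1 x2)
    (ξ : ℝ) (hξ : 0 < ξ)
    (G : ℝ → ℝ)
    (hmin : ∀ x2 : ℝ, 0 < x2 → ∀ y : ℝ, f (G x2) x2 ≤ f y x2)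
    (huniq : ∀ x2 : ℝ, 0 < x2 → ∀ y : ℝ, (∀ z : ℝ, f y x2 ≤ f z x2) → y = G x2)
    (hanti : ∀ x2 x2' : ℝ, 0 < x2 → x2 < x2' → G x2' ≤ G x2)
    (hbound : ∀ x2 : ℝ, 0 < x2 → G x2 ≤ -ξ)
    (hzero : {x1 : ℝ | f x1 0 = 0} = Set.Icc (-ξ) ξ)
    (hF : Filter.Tendsto (fun x2 => ⨅ x1 : ℝ, f x1 x2)
      (nhdsWithin 0 (Set.Ioi 0)) (nhds 0)) :
    Filter.Tendsto G (nhdsWithin 0 (Set.Ioi 0)) (nhds (-ξ)) := by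
  have hAnti : AntitoneOn G (Set.Ioi (0:ℝ)) := by
    intro a ha b hb hab
    rcases eq_or_lt_of_le hab with rfl | h
    · exact le_refl _
    · exact hanti a b ha h
  have hbddA : BddAbove (G '' Set.Ioi (0:ℝ)) := by
    refine ⟨-ξ, ?_⟩
    rintro y ⟨x, hx, rfl⟩
    exact hbound x hx
  set L : ℝ := sSup (G '' Set.Ioi (0:ℝ)) with hLdef
  have htend : Filter.Tendsto G (nhdsWithin 0 (Set.Ioi 0)) (nhds L) :=
    hAnti.tendsto_nhdsGT hbddA
  have hLle : L ≤ -ξ :=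
    csSup_le ⟨G 1, ⟨1, by norm_num, rfl⟩⟩ (by rintro y ⟨x, hx, rfl⟩; exact hbound x hx)
  have hpair : Filter.Tendsto (fun x2 : ℝ => ((G x2, x2) : ℝ × ℝ))
      (nhdsWithin 0 (Set.Ioi 0)) (nhds (L, 0)) :=
    htend.prodMk_nhds (Filter.tendsto_id.mono_left nhdsWithin_le_nhds)
  have hcomp : Filter.Tendsto (fun x2 : ℝ => f (G x2) x2)
      (nhdsWithin 0 (Set.Ioi 0)) (nhds (f L 0)) :=
    (hcont.tendsto (L, 0)).comp hpair
  have hval : ∀ x2 : ℝ, 0 < x2 → f (G x2) x2 = ⨅ x1 : ℝ, f x1 x2 := by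
    intro x2 hx2
    refine le_antisymm (le_ciInf fun x1 => hmin x2 hx2 x1) ?_
    exact ciInf_le ⟨0, by rintro y ⟨x1, rfl⟩; exact hnonneg x1 x2⟩ (G x2)
  have hF' : Filter.Tendsto (fun x2 : ℝ => f (G x2) x2)
      (nhdsWithin 0 (Set.Ioi 0)) (nhds 0) := by
    refine hF.congr' ?_
    filter_upwards [self_mem_nhdsWithin] with x2 hx2
    exact (hval x2 hx2).symm
  have hfL : f L 0 = 0 := tendsto_nhds_unique hcomp hF'
  have hmem : L ∈ Set.Icc (-ξ) ξ := by rw [← hzero]; exact hfL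
  have hLeq : L = -ξ := le_antisymm hLle hmem.1
  rwa [hLeq] at htend
end
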